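/- arXiv:1509.02052 — 5 statements merged into one kernel-verified Lean document; each statement's English description precedes it below -/
import Mathlib

section
/- Let Σ, Γ, G be groups, with Σ acting on Γ and on G by group automorphisms. Assume that every 1-cocycle a : Σ → G is a coboundary, i.e. for every map a : Σ → G satisfying a_{σσ'} = a_σ·σ(a_{σ'}) for all σ, σ' ∈ Σ there exists h ∈ G with a_σ = h⁻¹·σ(h) for all σ ∈ Σ. Then the assignment ρ ↦ ρ̂ induces a bijection from the quotient of the set of Σ-equivariant group homomorphisms ρ : Γ → G by the equivalence relation ρ₁ ∼ ρ₂ ⟺ ∃ g ∈ G^Σ with ρ₂ = Int_g ∘ ρ₁, onto the quotient of the set of homomorphisms of Σ-augmentations χ : Γ⋊Σ → G⋊Σ by the equivalence relation χ₁ ∼ χ₂ ⟺ ∃ g ∈ G with χ₂ = Int_{(g,1)} ∘ χ₁. -/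
/-- The set of Σ-equivariant group homomorphisms `ρ : Γ → G`. -/
def EquivHom {S Γ G : Type*} [Group S] [Group Γ] [Group G]
    (φΓ : S →* MulAut Γ) (φG : S →* MulAut G) :=
  {ρ : Γ →* G // ∀ (s : S) (γ : Γ), ρ (φΓ s γ) = φG s (ρ γ)}

/-- The set of homomorphisms of Σ-augmentations `χ : Γ⋊Σ → G⋊Σ`, i.e. group homomorphisms
commuting with the canonical projections onto Σ. -/
def AugHom {S Γ G : Type*} [Group S] [Group Γ] [Group G]
    (φΓ : S →* MulAut Γ) (φG : S →* MulAut G) :=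
  {χ : Γ ⋊[φΓ] S →* G ⋊[φG] S // ∀ x : Γ ⋊[φΓ] S, (χ x).right = x.right}

/-- The assignment `ρ ↦ ρ̂`, sending a Σ-equivariant homomorphism to the homomorphism of
Σ-augmentations `(γ, σ) ↦ (ρ(γ), σ)`. -/
def hatFun {S Γ G : Type*} [Group S] [Group Γ] [Group G]
    (φΓ : S →* MulAut Γ) (φG : S →* MulAut G) (ρ : EquivHom φΓ φG) : AugHom φΓ φG :=
  ⟨{ toFun := fun x => ⟨ρ.1 x.left, x.right⟩
     map_one' := by ext <;> simp
     map_mul' := fun x y => by ext <;> simp [ρ.2] },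
   fun x => rfl⟩

/-- Equivalence of Σ-equivariant homomorphisms: conjugation by an element of `G^Σ`. -/
def REquiv {S Γ G : Type*} [Group S] [Group Γ] [Group G]
    (φΓ : S →* MulAut Γ) (φG : S →* MulAut G) :
    EquivHom φΓ φG → EquivHom φΓ φG → Prop :=
  fun ρ₁ ρ₂ => ∃ g : G, (∀ s : S, φG s g = g) ∧ ∀ γ : Γ, ρ₂.1 γ = g * ρ₁.1 γ * g⁻¹

/-- Equivalence of homomorphisms of Σ-augmentations: conjugation by an element `(g, 1)`. -/
def RAug {S Γ G : Type*} [Group S] [Group Γ] [Group G]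
    (φΓ : S →* MulAut Γ) (φG : S →* MulAut G) :
    AugHom φΓ φG → AugHom φΓ φG → Prop :=
  fun χ₁ χ₂ => ∃ g : G, ∀ x : Γ ⋊[φΓ] S,
    χ₂.1 x = SemidirectProduct.inl g * χ₁.1 x * (SemidirectProduct.inl g)⁻¹

/-- If every 1-cocycle `a : Σ → G` is a coboundary, then `ρ ↦ ρ̂` induces a bijection from
Σ-equivariant homomorphisms `Γ → G` modulo `G^Σ`-conjugation onto homomorphisms of
Σ-augmentations `Γ⋊Σ → G⋊Σ` modulo conjugation by elements `(g, 1)`, `g ∈ G`. -/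
theorem stmt0 {S Γ G : Type*} [Group S] [Group Γ] [Group G]
    (φΓ : S →* MulAut Γ) (φG : S →* MulAut G)
    (hcob : ∀ a : S → G, (∀ s t : S, a (s * t) = a s * φG s (a t)) →
      ∃ h : G, ∀ s : S, a s = h⁻¹ * φG s h) :
    ∃ e : Quot (REquiv φΓ φG) ≃ Quot (RAug φΓ φG),
      ∀ ρ : EquivHom φΓ φG, e (Quot.mk _ ρ) = Quot.mk _ (hatFun φΓ φG ρ) := by
  classical
  -- RAug is an equivalence relation
  have hequiv : Equivalence (RAug φΓ φG) := by
    constructor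
    · intro χ; exact ⟨1, fun x => by simp⟩
    · rintro χ₁ χ₂ ⟨g, hg⟩
      refine ⟨g⁻¹, fun x => ?_⟩
      rw [hg x]; simp [mul_assoc]
    · rintro χ₁ χ₂ χ₃ ⟨g, hg⟩ ⟨g', hg'⟩
      refine ⟨g' * g, fun x => ?_⟩
      rw [hg' x, hg x]
      simp [mul_assoc]
  -- the induced map
  let F : Quot (REquiv φΓ φG) → Quot (RAug φΓ φG) :=
    Quot.lift (fun ρ => Quot.mk _ (hatFun φΓ φG ρ)) (by
      rintro ρ₁ ρ₂ ⟨g, hgfix, hρ⟩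
      apply Quot.sound
      refine ⟨g, fun x => ?_⟩
      ext
      · simp [hatFun, hρ, hgfix]
      · simp [hatFun])
  have hinj : Function.Injective F := by
    intro q₁ q₂
    induction q₁ using Quot.ind with | _ ρ₁ =>
    induction q₂ using Quot.ind with | _ ρ₂ =>
    intro h
    obtain ⟨g, hg⟩ := hequiv.eqvGen_iff.mp (Quot.eqvGen_exact h)
    apply Quot.sound
    have hfix : ∀ s : S, φG s g = g := by
      intro s
      have := congrArg SemidirectProduct.left (hg (SemidirectProduct.inr s))
      simp [hatFun] at this
      have h1 : g * ((φG s) g)⁻¹ = 1 := this.symm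
      exact (mul_inv_eq_one.mp h1).symm
    have hconj : ∀ γ : Γ, ρ₂.1 γ = g * ρ₁.1 γ * g⁻¹ := by
      intro γ
      have := congrArg SemidirectProduct.left (hg (SemidirectProduct.inl γ))
      simpa [hatFun] using this
    exact ⟨g, hfix, hconj⟩
  have hsurj : Function.Surjective F := by
    intro q
    induction q using Quot.ind with | _ χ =>
    -- the 1-cocycle associated to χ
    set a : S → G := fun s => (χ.1 (SemidirectProduct.inr s)).left with ha
    have hright : ∀ s : S, (χ.1 (SemidirectProduct.inr s)).right = s := fun s => by
      simpa using χ.2 (SemidirectProduct.inr s)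
    have hcoc : ∀ s t : S, a (s * t) = a s * φG s (a t) := by
      intro s t
      have : χ.1 (SemidirectProduct.inr (s * t)) =
          χ.1 (SemidirectProduct.inr s) * χ.1 (SemidirectProduct.inr t) := by
        rw [← map_mul, map_mul]
      have := congrArg SemidirectProduct.left this
      simpa [ha, hright s] using this
    obtain ⟨h, hh⟩ := hcob a hcoc
    -- the underlying function on Γ
    set c : Γ → G := fun γ => (χ.1 (SemidirectProduct.inl γ)).left with hc
    have hcright : ∀ γ : Γ, (χ.1 (SemidirectProduct.inl γ)).right = 1 := fun γ => by
      simpa using χ.2 (SemidirectProduct.inl γ)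
    have hcmul : ∀ γ₁ γ₂ : Γ, c (γ₁ * γ₂) = c γ₁ * c γ₂ := by
      intro γ₁ γ₂
      have : χ.1 (SemidirectProduct.inl (γ₁ * γ₂)) =
          χ.1 (SemidirectProduct.inl γ₁) * χ.1 (SemidirectProduct.inl γ₂) := by
        rw [← map_mul, map_mul]
      have := congrArg SemidirectProduct.left this
      simpa [hc, hcright γ₁] using this
    have hcequiv : ∀ (s : S) (γ : Γ), c (φΓ s γ) = a s * φG s (c γ) * (a s)⁻¹ := by
      intro s γ
      have : χ.1 (SemidirectProduct.inl (φΓ s γ)) =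
          χ.1 (SemidirectProduct.inr s) * χ.1 (SemidirectProduct.inl γ) *
            χ.1 (SemidirectProduct.inr s)⁻¹ := by
        rw [SemidirectProduct.inl_aut]; simp [map_mul]
      have := congrArg SemidirectProduct.left this
      simpa [hc, ha, hright s, hcright γ, mul_assoc] using this
    -- the equivariant homomorphism ρ = Int_h ∘ c
    set ρfun : Γ → G := fun γ => h * c γ * h⁻¹ with hρfun
    have hρmul : ∀ γ₁ γ₂ : Γ, ρfun (γ₁ * γ₂) = ρfun γ₁ * ρfun γ₂ := by
      intro γ₁ γ₂
      simp only [hρfun, hcmul]; group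
    have hcone : c 1 = 1 := by simp [hc]
    have hρone : ρfun 1 = 1 := by simp [hρfun, hcone]
    set ρ : EquivHom φΓ φG :=
      ⟨{ toFun := ρfun, map_one' := hρone, map_mul' := hρmul }, by
        intro s γ
        have hhs : φG s h = h * a s := by rw [hh s]; group
        show ρfun (φΓ s γ) = φG s (ρfun γ)
        simp only [hρfun, hcequiv s γ, map_mul, map_inv, hhs]
        group⟩ with hρdef
    refine ⟨Quot.mk _ ρ, ?_⟩
    show Quot.mk _ (hatFun φΓ φG ρ) = Quot.mk _ χ
    apply Quot.sound
    refine ⟨h⁻¹, fun x => ?_⟩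
    have hx : χ.1 x = χ.1 (SemidirectProduct.inl x.left) *
        χ.1 (SemidirectProduct.inr x.right) := by
      rw [← map_mul, SemidirectProduct.inl_left_mul_inr_right]
    have hhs : φG x.right h = h * a x.right := by rw [hh x.right]; group
    have hρx : (hatFun φΓ φG ρ).1 x = ⟨ρfun x.left, x.right⟩ := rfl
    rw [hx, hρx]
    ext
    · simp [hρfun, hc, ha, hcright, hright, hhs, mul_assoc]
    · simp [hcright, hright]
  exact ⟨Equiv.ofBijective F ⟨hinj, hsurj⟩, fun ρ => rfl⟩
end

section
/- Let Σ, Γ, G be groups, with Σ acting on Γ and on G by group automorphisms. Assume that every 1-cocycle a : Σ → G (i.e. every map with a_{σσ'} = a_σ·σ(a_{σ'})) is of the form a_σ = h⁻¹·σ(h) for some h ∈ G. Then for every homomorphism of Σ-augmentations χ : Γ⋊Σ → G⋊Σ there exists h ∈ G such that, writing ρ(γ) for the G-component of χ(γ,1), the homomorphism Int_h ∘ ρ : Γ → G is Σ-equivariant and the associated homomorphism of Σ-augmentations satisfies \widehat{Int_h ∘ ρ} = Int_{(h,1)} ∘ χ. In particular χ is conjugate to \widehat{Int_h∘ρ} by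 an element of G × {1}. -/
open SemidirectProduct

/-- If every 1-cocycle `a : Σ → G` is a coboundary, then for every homomorphism of
Σ-augmentations `χ : Γ⋊Σ → G⋊Σ` there exists `h ∈ G` such that, writing `ρ(γ)` for the
G-component of `χ(γ,1)`, the map `Int_h ∘ ρ` is Σ-equivariant and its associated homomorphism
of Σ-augmentations equals `Int_{(h,1)} ∘ χ`. -/
theorem stmt1 {S Γ G : Type*} [Group S] [Group Γ] [Group G]
    (φΓ : S →* MulAut Γ) (φG : S →* MulAut G)
    (hcob : ∀ a : S → G, (∀ s t : S, a (s * t) = a s * φG s (a t)) →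
      ∃ h : G, ∀ s : S, a s = h⁻¹ * φG s h)
    (χ : Γ ⋊[φΓ] S →* G ⋊[φG] S) (hχ : ∀ x : Γ ⋊[φΓ] S, (χ x).right = x.right) :
    ∃ h : G,
      (∀ (s : S) (γ : Γ),
        h * (χ (SemidirectProduct.inl (φΓ s γ))).left * h⁻¹
          = φG s (h * (χ (SemidirectProduct.inl γ)).left * h⁻¹)) ∧
      (∀ x : Γ ⋊[φΓ] S,
        (⟨h * (χ (SemidirectProduct.inl x.left)).left * h⁻¹, x.right⟩ : G ⋊[φG] S)
          = SemidirectProduct.inl h * χ x * (SemidirectProduct.inl h)⁻¹) := by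
  set a : S → G := fun s => (χ (inr s)).left with ha
  have hra : ∀ s : S, (χ (inr s)).right = s := fun s => by
    simpa using hχ (inr s)
  have hrl : ∀ γ : Γ, (χ (inl γ)).right = 1 := fun γ => by
    simpa using hχ (inl γ)
  have hcoc : ∀ s t : S, a (s * t) = a s * φG s (a t) := by
    intro s t
    have h1 : χ (inr (s * t)) = χ (inr s) * χ (inr t) := by rw [← map_mul, map_mul inr]
    have := congrArg SemidirectProduct.left h1
    simp only [ha, mul_left, hra s] at this; exact this
  have ha1 : a 1 = 1 := by
    have := hcoc 1 1
    simp at this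
    simpa using this
  have hainv : ∀ s : S, φG s (a s⁻¹) = (a s)⁻¹ := by
    intro s
    have := hcoc s s⁻¹
    rw [mul_inv_cancel, ha1] at this
    rw [eq_comm, ← eq_inv_mul_iff_mul_eq] at this
    simpa using this
  obtain ⟨h, hh⟩ := hcob a hcoc
  have key : ∀ (s : S) (γ : Γ), (χ (inl (φΓ s γ))).left
      = a s * φG s ((χ (inl γ)).left) * (a s)⁻¹ := by
    intro s γ
    have h1 : χ (inl (φΓ s γ)) = χ (inr s) * χ (inl γ) * χ (inr s⁻¹) := by
      rw [← map_mul, ← map_mul, inl_aut]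
    have := congrArg SemidirectProduct.left h1
    rw [mul_left, mul_left, mul_right, hra s, hrl γ, mul_one] at this
    have hb : (χ (inr s⁻¹)).left = a s⁻¹ := rfl
    have hc : (χ (inr s)).left = a s := rfl
    rw [this, hb, hc, hainv s]
  refine ⟨h, ?_, ?_⟩
  · intro s γ
    rw [key s γ, hh s]
    simp only [map_mul, map_inv]
    group
  · intro x
    have hx : χ x = χ (inl x.left) * χ (inr x.right) := by
      rw [← map_mul, inl_left_mul_inr_right]
    ext
    · have := congrArg SemidirectProduct.left hx
      rw [mul_left, hrl, map_one, MulAut.one_apply] at this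
      have hax : (χ (inr x.right)).left = a x.right := rfl
      rw [hax, hh x.right] at this
      simp only [mul_left, mul_right, left_inl, right_inl, inv_left, inv_right, this, hχ x,
        ← ha, hh x.right, map_one, MulAut.one_apply, one_mul, mul_one, inv_one]
      simp only [map_mul, map_inv]
      group
    · simp [hχ x]
end

section
/- Let m ≥ 1 and let J be the 2m×2m block matrix [[0, -I_m],[I_m, 0]], which is unitary with J² = -I. Let u be a 2m×2m complex unitary matrix. Then J·ū·J⁻¹ = u⁻¹ (where ū is the entrywise complex conjugate of u) if and only if there exists a 2m×2m complex unitary matrix v with u = v·J·vᵀ·J⁻¹. (This expresses the triviality of H¹(Z/2; U(2m)) for the action σ_H(u) = J·ū·J⁻¹ of Z/2 on U(2m): σ_H(u) = u⁻¹ if and only if u = v·σ_H(v⁻¹) for some unitary v.) -/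
/-!
If `σ(u) = u⁻¹ = u*`, take a square root `w` of `u` that is a polynomial `p(u)` and unitary:
`u` is normal with finite spectrum on the unit circle, so `p` can interpolate a branch of `√`
on the spectrum. Since `σ` is a conjugate-linear ring automorphism,
`σ(w) = p̄(σ u) = p̄(u*) = w*`, hence `w σ(w⁻¹) = w σ(w*) = w w = u`. Conversely `σ` is an
involution commuting with `*`, so every `v σ(v⁻¹)` satisfies `σ(u) = u*`.
-/

/-- The standard symplectic matrix `J = [[0, -I_m],[I_m, 0]]`. -/
noncomputable def Jmat (m : ℕ) : Matrix (Fin m ⊕ Fin m) (Fin m ⊕ Fin m) ℂ :=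
  Matrix.fromBlocks 0 (-1) 1 0

open Matrix Polynomial

theorem Polynomial.exists_eqOn_eval_of_finite {F : Type*} [Field F] {s : Set F} (hs : s.Finite)
    (f : F → F) : ∃ p : F[X], s.EqOn p.eval f := by
  classical
  refine ⟨Lagrange.interpolate hs.toFinset id f, fun x hx => ?_⟩
  exact Lagrange.eval_interpolate_at_node f Function.injective_id.injOn (hs.mem_toFinset.mpr hx)

theorem Polynomial.star_aeval {R A : Type*} [CommSemiring R] [StarRing R] [Semiring A]
    [StarRing A] [Algebra R A] [StarModule R A] (p : R[X]) (a : A) :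
    star (aeval a p) = aeval (star a) (p.map (starRingEnd R)) := by
  induction p using Polynomial.induction_on' with
  | add p q hp hq => simp only [map_add, star_add, hp, hq, Polynomial.map_add]
  | monomial n r =>
    simp only [aeval_monomial, Polynomial.map_monomial, ← Algebra.smul_def, star_smul, star_pow]
    rfl

theorem Polynomial.hom_aeval {R A B : Type*} [CommSemiring R] [Semiring A] [Semiring B]
    [Algebra R A] [Algebra R B] {F : Type*} [FunLike F A B] [RingHomClass F A B] (σ : F)
    (τ : R →+* R) (hσ : ∀ r, σ (algebraMap R A r) = algebraMap R B (τ r)) (p : R[X])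
    (a : A) :
    σ (aeval a p) = aeval (σ a) (p.map τ) := by
  rw [aeval_def, ← RingHom.coe_coe σ, hom_eval₂, aeval_def, eval₂_map]
  congr 1
  exact RingHom.ext hσ

section CStarAlgebra

variable {A : Type*} [CStarAlgebra A]

theorem exists_aeval_unitary_sqrt_of_finite_spectrum {u : A} (hu : u ∈ unitary A)
    (hfin : (spectrum ℂ u).Finite) :
    ∃ p : ℂ[X], aeval u p ∈ unitary A ∧ aeval u p * aeval u p = u := by
  have := isStarNormal_of_mem_unitary hu
  obtain ⟨p, hp⟩ := Polynomial.exists_eqOn_eval_of_finite hfin (· ^ (2⁻¹ : ℂ))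
  have hsq : ∀ z ∈ spectrum ℂ u, p.eval z * p.eval z = z := fun z hz => by
    rw [show p.eval z = z ^ (2⁻¹ : ℂ) from hp hz, ← sq, Complex.cpow_ofNat_inv_pow]
  refine ⟨p, ?_, ?_⟩
  · rw [← cfc_polynomial p u, cfc_unitary_iff _ u]
    intro z hz
    have hz1 : ‖z‖ = 1 :=
      CStarRing.norm_of_mem_unitary (spectrum_subset_unitary_of_mem_unitary hu hz)
    have : ‖p.eval z‖ ^ 2 = 1 := by rw [sq, ← norm_mul, hsq z hz, hz1]
    rw [RCLike.star_def, Complex.conj_mul']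
    exact_mod_cast this
  · rw [← cfc_polynomial p u, ← cfc_mul .., cfc_congr hsq, cfc_id' ..]

theorem exists_unitary_eq_mul_map_star_of_map_eq_star {F : Type*} [FunLike F A A]
    [RingHomClass F A A] (σ : F)
    (hσ_alg : ∀ c, σ (algebraMap ℂ A c) = algebraMap ℂ A (starRingEnd ℂ c))
    (hσ_star : ∀ a, σ (star a) = star (σ a)) {u : A} (hu : u ∈ unitary A)
    (hfin : (spectrum ℂ u).Finite) (hσu : σ u = star u) :
    ∃ w ∈ unitary A, u = w * σ (star w) := by
  obtain ⟨p, hw, hww⟩ := exists_aeval_unitary_sqrt_of_finite_spectrum hu hfin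
  have hσw : σ (aeval u p) = star (aeval u p) := by
    rw [Polynomial.hom_aeval σ _ hσ_alg, hσu, Polynomial.star_aeval]
  exact ⟨aeval u p, hw, by rw [hσ_star, hσw, star_star, hww]⟩

end CStarAlgebra

theorem map_eq_star_of_eq_mul_map_star {A F : Type*} [Monoid A] [StarMul A] [FunLike F A A]
    [MonoidHomClass F A A] (σ : F) (hσ_star : ∀ a, σ (star a) = star (σ a))
    (hσ_invol : ∀ a, σ (σ a) = a) {u v : A} (huv : u = v * σ (star v)) : σ u = star u := by
  rw [huv, map_mul, star_mul, hσ_invol, hσ_star, star_star]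

section StarRingEnd

variable {α ι κ : Type*} [CommSemiring α] [StarRing α]

theorem Matrix.conjTranspose_map_starRingEnd (M : Matrix ι κ α) :
    Mᴴ.map (starRingEnd α) = Mᵀ := by
  ext; simp [starRingEnd_apply]

theorem Matrix.map_starRingEnd_conjTranspose (M : Matrix ι κ α) :
    (M.map (starRingEnd α))ᴴ = Mᵀ := by
  ext; simp [starRingEnd_apply]

theorem Matrix.map_starRingEnd_map_starRingEnd (M : Matrix ι κ α) :
    (M.map (starRingEnd α)).map (starRingEnd α) = M := by
  ext; simp [starRingEnd_apply]

end StarRingEnd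

namespace Jmat

variable (m : ℕ)

theorem mul_self : Jmat m * Jmat m = -1 := by
  simp [Jmat, fromBlocks_multiply, ← fromBlocks_one, fromBlocks_neg]

theorem mul_neg_self : Jmat m * -Jmat m = 1 := by
  rw [mul_neg, mul_self, neg_neg]

theorem inv_eq_neg : (Jmat m)⁻¹ = -Jmat m :=
  inv_eq_right_inv (mul_neg_self m)

theorem mul_mul_self (M : Matrix (Fin m ⊕ Fin m) (Fin m ⊕ Fin m) ℂ) :
    Jmat m * (Jmat m * M) = -M := by
  rw [← mul_assoc, mul_self, neg_one_mul]

theorem map_conj : (Jmat m).map (starRingEnd ℂ) = Jmat m := by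
  simp [Jmat, fromBlocks_map, Matrix.map_neg, Matrix.map_one]

theorem conjTranspose_eq_neg : (Jmat m)ᴴ = -Jmat m := by
  simp [Jmat, fromBlocks_conjTranspose, fromBlocks_neg]

end Jmat

/-- The action `σ_H` of `ℤ/2` on `U(2m)`, extended to all matrices. -/
noncomputable def quaternionicConj (m : ℕ) :
    Matrix (Fin m ⊕ Fin m) (Fin m ⊕ Fin m) ℂ →+*
      Matrix (Fin m ⊕ Fin m) (Fin m ⊕ Fin m) ℂ where
  toFun M := Jmat m * M.map (starRingEnd ℂ) * (Jmat m)⁻¹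
  map_one' := by simp [Jmat.inv_eq_neg, Jmat.mul_self]
  map_mul' M N := by
    simp only [Matrix.map_mul, Jmat.inv_eq_neg, mul_neg, neg_mul, neg_neg, mul_assoc,
      Jmat.mul_mul_self]
  map_zero' := by simp
  map_add' M N := by simp [Matrix.map_add, mul_add, add_mul]

section quaternionicConj

variable (m : ℕ)

theorem quaternionicConj_apply (M : Matrix (Fin m ⊕ Fin m) (Fin m ⊕ Fin m) ℂ) :
    quaternionicConj m M = Jmat m * M.map (starRingEnd ℂ) * (Jmat m)⁻¹ := rfl

theorem quaternionicConj_algebraMap (c : ℂ) :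
    quaternionicConj m (algebraMap ℂ _ c) = algebraMap ℂ _ (starRingEnd ℂ c) := by
  rw [quaternionicConj_apply, Algebra.algebraMap_eq_smul_one, Matrix.map_smul' _ _ _ (map_mul _),
    Matrix.map_one _ (map_zero _) (map_one _), Matrix.mul_smul, mul_one, Matrix.smul_mul,
    Jmat.inv_eq_neg, Jmat.mul_neg_self, ← Algebra.algebraMap_eq_smul_one]

theorem quaternionicConj_star_eq (M : Matrix (Fin m ⊕ Fin m) (Fin m ⊕ Fin m) ℂ) :
    quaternionicConj m (star M) = Jmat m * Mᵀ * (Jmat m)⁻¹ := by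
  rw [quaternionicConj_apply, star_eq_conjTranspose, conjTranspose_map_starRingEnd]

theorem quaternionicConj_star (M : Matrix (Fin m ⊕ Fin m) (Fin m ⊕ Fin m) ℂ) :
    quaternionicConj m (star M) = star (quaternionicConj m M) := by
  rw [quaternionicConj_star_eq, quaternionicConj_apply, star_eq_conjTranspose, conjTranspose_mul,
    conjTranspose_mul, map_starRingEnd_conjTranspose, Jmat.inv_eq_neg, conjTranspose_neg,
    Jmat.conjTranspose_eq_neg, neg_neg, mul_assoc]

theorem quaternionicConj_quaternionicConj (M : Matrix (Fin m ⊕ Fin m) (Fin m ⊕ Fin m) ℂ) :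
    quaternionicConj m (quaternionicConj m M) = M := by
  rw [quaternionicConj_apply, quaternionicConj_apply, Matrix.map_mul, Matrix.map_mul, Jmat.map_conj,
    map_starRingEnd_map_starRingEnd, Jmat.inv_eq_neg, Matrix.map_neg _ (map_neg _), Jmat.map_conj]
  simp only [mul_neg, neg_neg, mul_assoc, Jmat.mul_mul_self, Jmat.mul_self, mul_one]

end quaternionicConj

section

open scoped Matrix.Norms.L2Operator

theorem quaternionicConj_eq_star_iff {m : ℕ} {u : Matrix (Fin m ⊕ Fin m) (Fin m ⊕ Fin m) ℂ}
    (hu : u ∈ unitaryGroup (Fin m ⊕ Fin m) ℂ) :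
    quaternionicConj m u = star u ↔
      ∃ v ∈ unitaryGroup (Fin m ⊕ Fin m) ℂ, u = v * quaternionicConj m (star v) := by
  constructor
  · exact exists_unitary_eq_mul_map_star_of_map_eq_star _ (quaternionicConj_algebraMap m)
      (quaternionicConj_star m) hu u.finite_spectrum
  · rintro ⟨v, -, rfl⟩
    exact map_eq_star_of_eq_mul_map_star _ (quaternionicConj_star m)
      (quaternionicConj_quaternionicConj m) rfl

end

theorem stmt7_general (m : ℕ)
    (u : Matrix (Fin m ⊕ Fin m) (Fin m ⊕ Fin m) ℂ)
    (hu : u ∈ Matrix.unitaryGroup (Fin m ⊕ Fin m) ℂ) :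
    Jmat m * u.map (starRingEnd ℂ) * (Jmat m)⁻¹ = u⁻¹ ↔
      ∃ v ∈ Matrix.unitaryGroup (Fin m ⊕ Fin m) ℂ,
        u = v * Jmat m * v.transpose * (Jmat m)⁻¹ := by
  rw [← quaternionicConj_apply, inv_eq_left_inv (Unitary.star_mul_self_of_mem hu),
    quaternionicConj_eq_star_iff hu]
  simp only [quaternionicConj_star_eq, mul_assoc]

/-- For a unitary `2m×2m` complex matrix `u`, one has `J·ū·J⁻¹ = u⁻¹` if and only if there
exists a unitary matrix `v` with `u = v·J·vᵀ·J⁻¹`. (Triviality of `H¹(ℤ/2; U(2m))` for the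
quaternionic action `σ_H(u) = J·ū·J⁻¹`.) -/
theorem stmt7 (m : ℕ) (hm : 1 ≤ m)
    (u : Matrix (Fin m ⊕ Fin m) (Fin m ⊕ Fin m) ℂ)
    (hu : u ∈ Matrix.unitaryGroup (Fin m ⊕ Fin m) ℂ) :
    Jmat m * u.map (starRingEnd ℂ) * (Jmat m)⁻¹ = u⁻¹ ↔
      ∃ v ∈ Matrix.unitaryGroup (Fin m ⊕ Fin m) ℂ,
        u = v * Jmat m * v.transpose * (Jmat m)⁻¹ :=
  stmt7_general m u hu
end

section
/- Let Γ be a group equipped with an action of the group Σ of order two (whose nontrivial element acts by an automorphism of Γ), and let Σ act on the unitary group U(n) by entrywise complex conjugation, whose fixed subgroup U(n)^Σ is the group O(n) of real orthogonal matrices. Then the assignment ρ ↦ ρ̂ induces a bijection from the set of Σ-equivariant group homomorphisms ρ : Γ → U(n) modulo conjugation by elements of O(n), onto the set of homomorphisms of Σ-augmentations χ : Γ⋊Σ → U(n)⋊Σ modulo conjugation by elements (u,1) with u ∈ U(n). -/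
open Matrix SemidirectProduct Polynomial

namespace SemidirectProduct

variable {N G : Type*} [Group N] [Group G] {φ : G →* MulAut N}

theorem inl_mul_mul_inl_inv (u : N) (y : N ⋊[φ] G) :
    inl u * y * (inl u)⁻¹ = ⟨u * y.left * φ y.right u⁻¹, y.right⟩ := by
  rw [← map_inv]
  ext <;> simp [mul_assoc]

end SemidirectProduct

section CrossedHom

variable {S G : Type*} [Group S] [Group G]

def IsCrossedHom (φ : S →* MulAut G) (c : S → G) : Prop :=
  ∀ s t, c (s * t) = c s * φ s (c t)

def IsPrincipalCrossedHom (φ : S →* MulAut G) (c : S → G) : Prop :=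
  ∃ u : G, ∀ s, c s = u * φ s u⁻¹

variable {φ : S →* MulAut G} {c : S → G}

theorem IsCrossedHom.map_one (hc : IsCrossedHom φ c) : c 1 = 1 := by
  simpa using hc 1 1

theorem IsCrossedHom.isPrincipal_of_forall_eq_one_or_eq {σ : S} (hS : ∀ s, s = 1 ∨ s = σ)
    (hc : IsCrossedHom φ c) {u : G} (hu : c σ = u * φ σ u⁻¹) : IsPrincipalCrossedHom φ c := by
  refine ⟨u, fun s => ?_⟩
  rcases hS s with rfl | rfl
  · simp [hc.map_one]
  · exact hu

end CrossedHom

section Augmentation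

variable {S Γ G : Type*} [Group S] [Group Γ] [Group G]
  (φΓ : S →* MulAut Γ) (φG : S →* MulAut G)

def FixedConj (ρ₁ ρ₂ : EquivHom φΓ φG) : Prop :=
  ∃ g : G, (∀ s, φG s g = g) ∧ ∀ γ, ρ₂.1 γ = g * ρ₁.1 γ * g⁻¹

def AugConj (χ₁ χ₂ : AugHom φΓ φG) : Prop :=
  ∃ u : G, ∀ x, χ₂.1 x = inl u * χ₁.1 x * (inl u)⁻¹

variable {φΓ φG}

theorem augConj_equivalence : Equivalence (AugConj φΓ φG) where
  refl _ := ⟨1, by simp⟩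
  symm := by
    rintro _ _ ⟨u, h⟩
    exact ⟨u⁻¹, fun x => by simp [h x, mul_assoc]⟩
  trans := by
    rintro _ _ _ ⟨u, h⟩ ⟨v, h'⟩
    exact ⟨v * u, fun x => by simp [h' x, h x, mul_assoc]⟩

theorem hatFun_apply (ρ : EquivHom φΓ φG) (x : Γ ⋊[φΓ] S) :
    (hatFun φΓ φG ρ).1 x = ⟨ρ.1 x.left, x.right⟩ := rfl

theorem augConj_hatFun_iff {ρ₁ ρ₂ : EquivHom φΓ φG} :
    AugConj φΓ φG (hatFun φΓ φG ρ₁) (hatFun φΓ φG ρ₂) ↔ FixedConj φΓ φG ρ₁ ρ₂ := by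
  simp only [AugConj, FixedConj, hatFun_apply, inl_mul_mul_inl_inv, SemidirectProduct.ext_iff,
    and_true]
  refine exists_congr fun u => ⟨fun h => ⟨fun s => ?_, fun γ => ?_⟩, fun ⟨hu, h⟩ x => ?_⟩
  · have h1 : 1 = u * (φG s u)⁻¹ := by simpa using h (inr s)
    exact (mul_inv_eq_one.1 h1.symm).symm
  · simpa using h (inl γ)
  · rw [map_inv, hu, h]

namespace AugHom

variable (χ : AugHom φΓ φG)

def crossedHom (s : S) : G := (χ.1 (inr s)).left

def restrict : Γ →* G where
  toFun γ := (χ.1 (inl γ)).left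
  map_one' := by simp
  map_mul' a b := by simp [χ.2 (inl a)]

theorem isCrossedHom_crossedHom : IsCrossedHom φG χ.crossedHom := fun s t => by
  simp [crossedHom, χ.2 (inr s)]

theorem restrict_mul_crossedHom (s : S) (γ : Γ) :
    χ.restrict (φΓ s γ) * χ.crossedHom s = χ.crossedHom s * φG s (χ.restrict γ) := by
  have h : (inl (φΓ s γ) : Γ ⋊[φΓ] S) * inr s = inr s * inl γ := by
    rw [inl_aut, map_inv, inv_mul_cancel_right]
  simpa [restrict, crossedHom, χ.2 (inl _), χ.2 (inr s)] using congrArg (fun x => (χ.1 x).left) h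

theorem left_apply (x : Γ ⋊[φΓ] S) :
    (χ.1 x).left = χ.restrict x.left * χ.crossedHom x.right := by
  have h : χ.1 x = χ.1 (inl x.left) * χ.1 (inr x.right) := by
    rw [← map_mul, inl_left_mul_inr_right]
  simp [h, restrict, crossedHom, χ.2 (inl x.left)]

theorem exists_augConj_hatFun (hχ : IsPrincipalCrossedHom φG χ.crossedHom) :
    ∃ ρ, AugConj φΓ φG (hatFun φΓ φG ρ) χ := by
  obtain ⟨u, hu⟩ := hχ
  let ρ : Γ →* G := (MulAut.conj u⁻¹).toMonoidHom.comp χ.restrict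
  have hρ : ∀ s γ, ρ (φΓ s γ) = φG s (ρ γ) := by
    intro s γ
    have h := χ.restrict_mul_crossedHom s γ
    rw [← eq_mul_inv_iff_mul_eq] at h
    simp only [ρ, MulEquiv.toMonoidHom_eq_coe, MonoidHom.coe_comp, MonoidHom.coe_coe,
      MulAut.coe_inv, Function.comp_apply, MulAut.conj_symm_apply, h, hu, map_mul, map_inv,
      _root_.mul_inv_rev, inv_inv]
    group
  refine ⟨⟨ρ, hρ⟩, u, fun x => ?_⟩
  rw [inl_mul_mul_inl_inv]
  refine SemidirectProduct.ext ?_ (χ.2 x)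
  show (χ.1 x).left = u * ρ x.left * φG x.right u⁻¹
  simp [ρ, left_apply, hu, mul_assoc]

end AugHom

def hatQuot : Quot (FixedConj φΓ φG) → Quot (AugConj φΓ φG) :=
  Quot.map (hatFun φΓ φG) fun _ _ => augConj_hatFun_iff.2

theorem hatQuot_injective : Function.Injective (hatQuot (φΓ := φΓ) (φG := φG)) := by
  rintro ⟨ρ₁⟩ ⟨ρ₂⟩ h
  exact Quot.sound (augConj_hatFun_iff.1 (augConj_equivalence.eqvGen_iff.1 (Quot.eq.1 h)))

theorem hatQuot_surjective (hG : ∀ c, IsCrossedHom φG c → IsPrincipalCrossedHom φG c) :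
    Function.Surjective (hatQuot (φΓ := φΓ) (φG := φG)) := by
  rintro ⟨χ⟩
  obtain ⟨ρ, hρ⟩ := χ.exists_augConj_hatFun (hG _ χ.isCrossedHom_crossedHom)
  exact ⟨Quot.mk _ ρ, Quot.sound hρ⟩

end Augmentation

section Unitary

open scoped Matrix.Norms.L2Operator

variable {ι : Type*} [Fintype ι] [DecidableEq ι]

theorem Matrix.transpose_aeval {R : Type*} [CommSemiring R] (M : Matrix ι ι R) (p : R[X]) :
    (aeval M p)ᵀ = aeval Mᵀ p := by
  simp only [aeval_eq_sum_range, transpose_sum, transpose_smul, transpose_pow]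

theorem exists_polynomial_eval_sq_eq (s : Finset ℂ) : ∃ p : ℂ[X], ∀ z ∈ s, p.eval z ^ 2 = z :=
  ⟨Lagrange.interpolate s id (· ^ (2⁻¹ : ℂ)), fun z hz => by
    rw [← id_eq z, Lagrange.eval_interpolate_at_node _ (Set.injOn_id _) hz]
    exact_mod_cast Complex.cpow_nat_inv_pow z two_ne_zero⟩

theorem exists_mem_unitary_transpose_eq_and_mul_self_eq {c : Matrix ι ι ℂ}
    (hc : c ∈ unitary (Matrix ι ι ℂ)) (hsymm : cᵀ = c) :
    ∃ u ∈ unitary (Matrix ι ι ℂ), uᵀ = u ∧ u * u = c := by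
  obtain ⟨p, hp⟩ := exists_polynomial_eval_sq_eq c.finite_spectrum.toFinset
  replace hp : ∀ z ∈ spectrum ℂ c, p.eval z ^ 2 = z := fun z hz => hp z (by simpa using hz)
  have : IsStarNormal c := isStarNormal_of_mem_unitary hc
  refine ⟨aeval c p, ?_, by rw [transpose_aeval, hsymm], ?_⟩
  · rw [← cfc_polynomial p c, cfc_unitary_iff _ c]
    intro z hz
    have hz1 : ‖z‖ = 1 := by simpa using spectrum.subset_circle_of_unitary hc hz
    rw [Complex.star_def, Complex.conj_mul', ← Complex.ofReal_pow, ← norm_pow, hp z hz, hz1,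
      Complex.ofReal_one]
  · rw [← cfc_polynomial p c, ← sq, ← cfc_pow _ 2 c, cfc_congr hp, cfc_id' ℂ c]

theorem unitaryGroup_exists_eq_mul_inv_of_mul_eq_one (φ : MulAut (unitaryGroup ι ℂ))
    (hφ : ∀ u, (φ u : Matrix ι ι ℂ) = (u : Matrix ι ι ℂ).map (starRingEnd ℂ))
    {c : unitaryGroup ι ℂ} (hc : c * φ c = 1) : ∃ u, c = u * φ u⁻¹ := by
  have hconj : (c : Matrix ι ι ℂ).map (starRingEnd ℂ) = star (c : Matrix ι ι ℂ) := by
    rw [← hφ, eq_inv_of_mul_eq_one_right hc, UnitaryGroup.inv_val]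
  have hsymm : (c : Matrix ι ι ℂ)ᵀ = c := by
    ext i j
    simpa using congrArg (fun m => star (m j i)) hconj
  obtain ⟨u, hu, hut, huu⟩ := exists_mem_unitary_transpose_eq_and_mul_self_eq c.2 hsymm
  refine ⟨⟨u, hu⟩, Subtype.ext ?_⟩
  have hinv : ((φ ⟨u, hu⟩)⁻¹ : unitaryGroup ι ℂ) = u := by
    rw [UnitaryGroup.inv_val, hφ]
    ext i j
    simpa using congrFun (congrFun hut i) j
  rw [map_inv, Submonoid.coe_mul, hinv, huu]

end Unitary

/-- Let `Σ` be a group of order two acting on a group `Γ`, and acting on `U(n)` by entrywise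
complex conjugation (with fixed subgroup `O(n)`, the real orthogonal matrices). Then `ρ ↦ ρ̂`
induces a bijection from Σ-equivariant homomorphisms `Γ → U(n)` modulo conjugation by
elements of `O(n)` onto homomorphisms of Σ-augmentations `Γ⋊Σ → U(n)⋊Σ` modulo conjugation
by elements `(u, 1)` with `u ∈ U(n)`. -/
theorem stmt8 (n : ℕ) {S Γ : Type*} [Group S] [Group Γ]
    (hS : Nat.card S = 2)
    (φΓ : S →* MulAut Γ)
    (φU : S →* MulAut (Matrix.unitaryGroup (Fin n) ℂ))
    (hφU : ∀ s : S, s ≠ 1 → ∀ u : Matrix.unitaryGroup (Fin n) ℂ,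
      ((φU s u : Matrix (Fin n) (Fin n) ℂ))
        = (u : Matrix (Fin n) (Fin n) ℂ).map (starRingEnd ℂ)) :
    ∃ e : Quot (fun ρ₁ ρ₂ : EquivHom φΓ φU =>
            ∃ g : Matrix.unitaryGroup (Fin n) ℂ,
              ((g : Matrix (Fin n) (Fin n) ℂ).map (starRingEnd ℂ)
                  = (g : Matrix (Fin n) (Fin n) ℂ)) ∧
              ∀ γ : Γ, ρ₂.1 γ = g * ρ₁.1 γ * g⁻¹)
          ≃ Quot (fun χ₁ χ₂ : AugHom φΓ φU =>
            ∃ u : Matrix.unitaryGroup (Fin n) ℂ, ∀ x : Γ ⋊[φΓ] S,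
              χ₂.1 x = SemidirectProduct.inl u * χ₁.1 x * (SemidirectProduct.inl u)⁻¹),
      ∀ ρ : EquivHom φΓ φU, e (Quot.mk _ ρ) = Quot.mk _ (hatFun φΓ φU ρ) := by
  obtain ⟨σ, hσ, hσ_unique⟩ := (Nat.card_eq_two_iff' (1 : S)).mp hS
  have hS' : ∀ s : S, s = 1 ∨ s = σ := fun s => (eq_or_ne s 1).imp_right (hσ_unique s)
  have hσσ : σ * σ = 1 := (hS' (σ * σ)).resolve_right fun h => hσ (by simpa using h)
  have hfixed : ∀ g : unitaryGroup (Fin n) ℂ,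
      (g : Matrix (Fin n) (Fin n) ℂ).map (starRingEnd ℂ) = g ↔ ∀ s, φU s g = g := by
    refine fun g => ⟨fun hg s => ?_, fun hg => by rw [← hφU σ hσ, hg]⟩
    rcases hS' s with rfl | rfl
    · simp
    · exact Subtype.ext ((hφU s hσ g).trans hg)
  have hH1 : ∀ c, IsCrossedHom φU c → IsPrincipalCrossedHom φU c := fun c hc => by
    obtain ⟨u, hu⟩ := unitaryGroup_exists_eq_mul_inv_of_mul_eq_one (φU σ) (hφU σ hσ)
      (c := c σ) (by rw [← hc, hσσ, hc.map_one])
    exact hc.isPrincipal_of_forall_eq_one_or_eq hS' hu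
  refine ⟨(Quot.congrRight fun ρ₁ ρ₂ => exists_congr fun g => and_congr_left' (hfixed g)).trans
    (Equiv.ofBijective _ ⟨hatQuot_injective, hatQuot_surjective hH1⟩), fun ρ => rfl⟩
end

section
/- Let m ≥ 1 and let T : ℂ^{2m} → ℂ^{2m} be an additive, conjugate-linear map (T(λ·v) = λ̄·T(v) for all λ ∈ ℂ, v) which is norm-preserving (‖T(v)‖ = ‖v‖ for all v) and satisfies T ∘ T = -id. Then there exists an orthonormal basis (e₁, …, e_m, f₁, …, f_m) of ℂ^{2m} (with respect to the standard Hermitian inner product) such that T(eᵢ) = fᵢ and T(fᵢ) = -eᵢ for all i. Equivalently, T is unitarily conjugate to the standard quaternionic structure v ↦ J·v̄ on ℂ^{2m}, where J is the block matrix [[0, -I_m],[I_m, 0]]. -/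
/-! Polarization shows that a conjugate-linear isometry satisfies `⟪T x, T y⟫ = ⟪y, x⟫`; together
with `T² = -1` this gives `⟪v, T v⟫ = 0`. So if `e₁, …, e_k` are orthonormal and orthogonal to all
`T eⱼ`, the family `(e, T e)` is orthonormal, and any unit vector orthogonal to it can be adjoined
to `e`. After `m` steps the `2m` vectors `(e, T e)` are an orthonormal basis. -/

open scoped InnerProductSpace
open Module Submodule

theorem exists_norm_eq_one_forall_inner_eq_zero {𝕜 E ι : Type*} [RCLike 𝕜]
    [NormedAddCommGroup E] [InnerProductSpace 𝕜 E] [Fintype ι] (g : ι → E)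
    (hcard : Fintype.card ι < finrank 𝕜 E) :
    ∃ u : E, ‖u‖ = 1 ∧ ∀ i, ⟪g i, u⟫_𝕜 = 0 := by
  have : FiniteDimensional 𝕜 E := Module.finite_of_finrank_pos (by omega)
  have hS : span 𝕜 (Set.range g) ≠ ⊤ := fun h => by
    have := finrank_range_le_card (R := 𝕜) g
    rw [Set.finrank, h, finrank_top] at this
    omega
  obtain ⟨x, hx, hx0⟩ := exists_mem_ne_zero_of_ne_bot (mt orthogonal_eq_bot_iff.mp hS)
  refine ⟨(‖x‖⁻¹ : 𝕜) • x, norm_smul_inv_norm hx0, fun i => ?_⟩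
  exact inner_right_of_mem_orthogonal (subset_span (Set.mem_range_self i)) (smul_mem _ _ hx)

theorem LinearIsometry.inner_map_map_of_starRingEnd {E F : Type*} [NormedAddCommGroup E]
    [InnerProductSpace ℂ E] [NormedAddCommGroup F] [InnerProductSpace ℂ F]
    (T : E →ₗᵢ⋆[ℂ] F) (x y : E) : ⟪T x, T y⟫_ℂ = ⟪y, x⟫_ℂ := by
  have h1 : ‖T x + T y‖ = ‖y + x‖ := by rw [← map_add, T.norm_map, add_comm]
  have h2 : ‖T x - T y‖ = ‖y - x‖ := by rw [← map_sub, T.norm_map, norm_sub_rev]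
  -- `T (x ± I • y) = T x ∓ I • T y`, and `y ∓ I • x` is a unimodular multiple of `x ± I • y`.
  have h3 : ‖T x - Complex.I • T y‖ = ‖y - Complex.I • x‖ := by
    rw [show y - Complex.I • x = (-Complex.I) • (x + Complex.I • y) by
          rw [smul_add, smul_smul]; simp; abel,
      norm_smul, ← T.norm_map, map_add, T.map_smulₛₗ]
    simp [sub_eq_add_neg]
  have h4 : ‖T x + Complex.I • T y‖ = ‖y + Complex.I • x‖ := by
    rw [show y + Complex.I • x = Complex.I • (x - Complex.I • y) by
          rw [smul_sub, smul_smul]; simp; abel,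
      norm_smul, ← T.norm_map, map_sub, T.map_smulₛₗ]
    simp [sub_eq_add_neg]
  rw [inner_eq_sum_norm_sq_div_four (T x), inner_eq_sum_norm_sq_div_four y x]
  simp only [RCLike.I_to_complex, h1, h2, h3, h4]

section QuaternionicStructure

variable {E : Type*} [NormedAddCommGroup E] [InnerProductSpace ℂ E] {T : E →ₗᵢ⋆[ℂ] E}

theorem inner_self_map_eq_zero_of_map_map_eq_neg (hT : ∀ v, T (T v) = -v) (v : E) :
    ⟪v, T v⟫_ℂ = 0 := by
  have h := T.inner_map_map_of_starRingEnd (T v) v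
  rw [hT, inner_neg_left] at h
  linear_combination (-1 / 2 : ℂ) * h

theorem orthonormal_sumElim_comp_of_inner_map_eq_zero {ι : Type*} {e : ι → E} (he : Orthonormal ℂ e) (heT : ∀ i j, ⟪e i, T (e j)⟫_ℂ = 0) :
    Orthonormal ℂ (Sum.elim e (T ∘ e)) := by
  classical
  rw [orthonormal_iff_ite] at he ⊢
  rintro (i | i) (j | j)
  · simpa using he i j
  · simpa using heT i j
  · simpa [inner_eq_zero_symm] using heT j i
  · simp [T.inner_map_map_of_starRingEnd, he j i, eq_comm]

theorem exists_vecCons_orthonormal_inner_map_eq_zero (hT : ∀ v, T (T v) = -v) {k : ℕ}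
    {e : Fin k → E} (he : Orthonormal ℂ e) (heT : ∀ i j, ⟪e i, T (e j)⟫_ℂ = 0)
    (hk : 2 * k < finrank ℂ E) :
    ∃ u : E, Orthonormal ℂ (Matrix.vecCons u e) ∧
      ∀ i j, ⟪Matrix.vecCons u e i, T (Matrix.vecCons u e j)⟫_ℂ = 0 := by
  obtain ⟨u, hu, hperp⟩ := exists_norm_eq_one_forall_inner_eq_zero (𝕜 := ℂ) (Sum.elim e (T ∘ e))
    (by simpa [two_mul] using hk)
  have hue : ∀ i, ⟪u, e i⟫_ℂ = 0 := fun i => inner_eq_zero_symm.mp (hperp (Sum.inl i))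
  have huTe : ∀ i, ⟪u, T (e i)⟫_ℂ = 0 := fun i => inner_eq_zero_symm.mp (hperp (Sum.inr i))
  have heTu : ∀ i, ⟪e i, T u⟫_ℂ = 0 := fun i => by
    rw [show e i = -T (T (e i)) by rw [hT, neg_neg], inner_neg_left,
      T.inner_map_map_of_starRingEnd, huTe, neg_zero]
  refine ⟨u, orthonormal_vecCons_iff.mpr ⟨hu, hue, he⟩, ?_⟩
  simp [Fin.forall_fin_succ, inner_self_map_eq_zero_of_map_map_eq_neg hT, huTe, heTu, heT]

theorem exists_orthonormal_inner_map_eq_zero (hT : ∀ v, T (T v) = -v) :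
    ∀ k, 2 * k ≤ finrank ℂ E →
      ∃ e : Fin k → E, Orthonormal ℂ e ∧ ∀ i j, ⟪e i, T (e j)⟫_ℂ = 0
  | 0, _ => ⟨Fin.elim0, .of_isEmpty _, fun i => i.elim0⟩
  | k + 1, hk => by
    obtain ⟨e, he, heT⟩ := exists_orthonormal_inner_map_eq_zero hT k (by omega)
    obtain ⟨u, hu⟩ := exists_vecCons_orthonormal_inner_map_eq_zero hT he heT (by omega)
    exact ⟨_, hu⟩

theorem exists_orthonormalBasis_map_inl_eq_inr [FiniteDimensional ℂ E] (hT : ∀ v, T (T v) = -v)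
    {m : ℕ} (hdim : finrank ℂ E = m + m) :
    ∃ b : OrthonormalBasis (Fin m ⊕ Fin m) ℂ E,
      ∀ i, T (b (Sum.inl i)) = b (Sum.inr i) ∧ T (b (Sum.inr i)) = -b (Sum.inl i) := by
  obtain ⟨e, he, heT⟩ := exists_orthonormal_inner_map_eq_zero hT m (by omega)
  have horth := orthonormal_sumElim_comp_of_inner_map_eq_zero he heT
  have hspan : span ℂ (Set.range (Sum.elim e (T ∘ e))) = ⊤ :=
    horth.linearIndependent.span_eq_top_of_card_eq_finrank' (by simp [hdim])
  refine ⟨OrthonormalBasis.mk horth hspan.ge, fun i => ?_⟩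
  simp [hT]

end QuaternionicStructure

theorem stmt17_general (m : ℕ)
    (T : EuclideanSpace ℂ (Fin m ⊕ Fin m) → EuclideanSpace ℂ (Fin m ⊕ Fin m))
    (hadd : ∀ v w : EuclideanSpace ℂ (Fin m ⊕ Fin m), T (v + w) = T v + T w)
    (hsmul : ∀ (c : ℂ) (v : EuclideanSpace ℂ (Fin m ⊕ Fin m)),
      T (c • v) = (starRingEnd ℂ c) • T v)
    (hnorm : ∀ v : EuclideanSpace ℂ (Fin m ⊕ Fin m), ‖T v‖ = ‖v‖)
    (hinv : ∀ v : EuclideanSpace ℂ (Fin m ⊕ Fin m), T (T v) = -v) :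
    ∃ e : OrthonormalBasis (Fin m ⊕ Fin m) ℂ (EuclideanSpace ℂ (Fin m ⊕ Fin m)),
      ∀ i : Fin m, T (e (Sum.inl i)) = e (Sum.inr i) ∧ T (e (Sum.inr i)) = -(e (Sum.inl i)) :=
  exists_orthonormalBasis_map_inl_eq_inr (T := ⟨⟨⟨T, hadd⟩, hsmul⟩, hnorm⟩) hinv (by simp)

/-- A conjugate-linear, norm-preserving map `T` of `ℂ^{2m}` with `T² = -id` (a Quaternionic
structure) admits an orthonormal basis `(e₁,…,e_m,f₁,…,f_m)` with `T(eᵢ) = fᵢ` and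
`T(fᵢ) = -eᵢ`; equivalently `T` is unitarily conjugate to the standard quaternionic structure
`v ↦ J·v̄`. -/
theorem stmt17 (m : ℕ) (hm : 1 ≤ m)
    (T : EuclideanSpace ℂ (Fin m ⊕ Fin m) → EuclideanSpace ℂ (Fin m ⊕ Fin m))
    (hadd : ∀ v w : EuclideanSpace ℂ (Fin m ⊕ Fin m), T (v + w) = T v + T w)
    (hsmul : ∀ (c : ℂ) (v : EuclideanSpace ℂ (Fin m ⊕ Fin m)),
      T (c • v) = (starRingEnd ℂ c) • T v)
    (hnorm : ∀ v : EuclideanSpace ℂ (Fin m ⊕ Fin m), ‖T v‖ = ‖v‖)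
    (hinv : ∀ v : EuclideanSpace ℂ (Fin m ⊕ Fin m), T (T v) = -v) :
    ∃ e : OrthonormalBasis (Fin m ⊕ Fin m) ℂ (EuclideanSpace ℂ (Fin m ⊕ Fin m)),
      ∀ i : Fin m, T (e (Sum.inl i)) = e (Sum.inr i) ∧ T (e (Sum.inr i)) = -(e (Sum.inl i)) :=
  stmt17_general m T hadd hsmul hnorm hinv
end
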